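/- arXiv:2112.09750 — 5 statements merged into one kernel-verified Lean document; each statement's English description precedes it below -/
import Mathlib

section
/- For every l ≥ 0, the space of ℝ²-valued polynomial vector fields of total degree ≤ l on ℝ² decomposes as a direct sum 𝒢^l ⊕ 𝒢^{c,l}, where 𝒢^l = { ∇p : p polynomial of degree ≤ l+1 } and 𝒢^{c,l} = { x^⊥ q : q polynomial of degree ≤ l−1 }, with x^⊥ = (−x₂, x₁) (and 𝒢^{c,l} = {0} when l = 0). -/
/-
The Euler operator E p = x₁ ∂₁p + x₂ ∂₂p multiplies each monomial by its degree, so it kills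
only the constants and maps the polynomials of degree ≤ n onto those of degree ≤ n without
constant term. Given a field v of degree ≤ l, pick p of degree ≤ l + 1 with E p = x · v; then
x · (v − ∇p) = 0, and since x₁ and x₂ are coprime, v − ∇p = x^⊥ q. Conversely, if ∇p = x^⊥ q,
then E p = (x · x^⊥) q = 0, so ∇p = 0.
-/

open MvPolynomial

/-- ℝ²-valued polynomial vector fields with components of total degree ≤ l. -/
noncomputable def polyVec2 (l : ℕ) : Submodule ℝ (Fin 2 → MvPolynomial (Fin 2) ℝ) :=
  Submodule.pi Set.univ fun _ => MvPolynomial.restrictTotalDegree (Fin 2) ℝ l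

/-- 𝒢^l = gradients of polynomials of degree ≤ l+1. -/
noncomputable def Gsp2 (l : ℕ) : Submodule ℝ (Fin 2 → MvPolynomial (Fin 2) ℝ) :=
  Submodule.span ℝ {v | ∃ p : MvPolynomial (Fin 2) ℝ,
    p.totalDegree ≤ l + 1 ∧ v = fun i => MvPolynomial.pderiv i p}

/-- The rotated coordinate vector x^⊥ = (−x₂, x₁). -/
noncomputable def xperp2 : Fin 2 → MvPolynomial (Fin 2) ℝ := ![-(X 1), X 0]

/-- 𝒢^{c,l} = x^⊥ 𝒫^{l−1} (reduced to {0} when l = 0). -/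
noncomputable def Gcsp2 (l : ℕ) : Submodule ℝ (Fin 2 → MvPolynomial (Fin 2) ℝ) :=
  Submodule.span ℝ {v | ∃ q : MvPolynomial (Fin 2) ℝ,
    q.totalDegree + 1 ≤ l ∧ v = fun i => xperp2 i * q}

namespace MvPolynomial

variable {σ R : Type*}

section CommSemiring

variable [CommSemiring R]

theorem coeff_X_mul_pderiv (i : σ) (m : σ →₀ ℕ) (p : MvPolynomial σ R) :
    coeff m (X i * pderiv i p) = m i • coeff m p := by
  classical
  induction p using MvPolynomial.induction_on' with
  | monomial n a =>
    simp only [X_mul_pderiv_monomial, coeff_smul, coeff_monomial]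
    split_ifs with h <;> simp [h]
  | add p q hp hq => simp only [map_add, mul_add, coeff_add, hp, hq, smul_add]

theorem totalDegree_X_mul_pderiv_le (i : σ) (p : MvPolynomial σ R) :
    (X i * pderiv i p).totalDegree ≤ p.totalDegree :=
  totalDegree_le_of_support_subset fun m => by
    simpa only [mem_support_iff, coeff_X_mul_pderiv] using right_ne_zero_of_smul

theorem totalDegree_X_mul [NoZeroDivisors R] [Nontrivial R] (i : σ) {q : MvPolynomial σ R}
    (hq : q ≠ 0) : (X i * q).totalDegree = q.totalDegree + 1 := by
  rw [totalDegree_mul_of_isDomain (X_ne_zero i) hq, totalDegree_X, add_comm]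

theorem totalDegree_pderiv_le [NoZeroDivisors R] [Nontrivial R] (i : σ) (p : MvPolynomial σ R) :
    (pderiv i p).totalDegree ≤ p.totalDegree - 1 := by
  by_cases h : pderiv i p = 0
  · simp [h]
  · have := totalDegree_X_mul_pderiv_le i p
    rw [totalDegree_X_mul i h] at this
    omega

variable [Fintype σ]

noncomputable def euler (p : MvPolynomial σ R) : MvPolynomial σ R :=
  ∑ i, X i * pderiv i p

theorem coeff_euler (m : σ →₀ ℕ) (p : MvPolynomial σ R) :
    coeff m (euler p) = m.degree • coeff m p := by
  simp only [euler, coeff_sum, coeff_X_mul_pderiv, ← Finset.sum_smul, Finsupp.degree_eq_sum]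

theorem eq_C_of_euler_eq_zero [NoZeroDivisors R] [CharZero R] {p : MvPolynomial σ R}
    (h : euler p = 0) : p = C (coeff 0 p) := by
  classical
  ext m
  rcases eq_or_ne m 0 with rfl | hm
  · rw [coeff_C, if_pos rfl]
  · have hcoeff := coeff_euler m p
    rw [h, coeff_zero, eq_comm, nsmul_eq_mul, mul_eq_zero, Nat.cast_eq_zero] at hcoeff
    rw [coeff_C, if_neg (Ne.symm hm)]
    exact hcoeff.resolve_left (by rwa [Finsupp.degree_eq_zero_iff])

end CommSemiring

theorem exists_euler_eq [Fintype σ] [Field R] [CharZero R] {f : MvPolynomial σ R}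
    (hf : constantCoeff f = 0) :
    ∃ p : MvPolynomial σ R, p.totalDegree ≤ f.totalDegree ∧ euler p = f := by
  classical
  set p := ∑ m ∈ f.support, monomial m ((m.degree : R)⁻¹ * coeff m f)
  have hp : ∀ m, coeff m p = (m.degree : R)⁻¹ * coeff m f := by
    intro m
    simp only [p, coeff_sum, coeff_monomial, Finset.sum_ite_eq', mem_support_iff]
    split_ifs with h
    · rfl
    · rw [not_not.mp h, mul_zero]
  refine ⟨p, totalDegree_le_of_support_subset fun m => ?_, ?_⟩
  · simp only [mem_support_iff, hp]
    exact right_ne_zero_of_mul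
  · ext m
    rw [coeff_euler, hp, nsmul_eq_mul]
    rcases eq_or_ne m 0 with rfl | hm
    · rw [← constantCoeff_eq, hf, mul_zero, mul_zero]
    · have hdeg : (m.degree : R) ≠ 0 := by simpa [Finsupp.degree_eq_zero_iff] using hm
      rw [← mul_assoc, mul_inv_cancel₀ hdeg, one_mul]

theorem exists_eq_neg_X_mul_and_eq_X_mul [CommRing R] [IsDomain R] {i j : σ} (hij : i ≠ j)
    {a b : MvPolynomial σ R} (h : X i * a + X j * b = 0) :
    ∃ q, a = -(X j * q) ∧ b = X i * q := by
  have hdvd : X i ∣ X j * b := ⟨-a, by linear_combination h⟩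
  obtain ⟨q, rfl⟩ := ((X_prime (i := i)).dvd_or_dvd hdvd).resolve_left (by simpa using hij)
  refine ⟨q, mul_left_cancel₀ (X_ne_zero i) ?_, rfl⟩
  linear_combination h

end MvPolynomial

theorem mem_polyVec2 {l : ℕ} {v : Fin 2 → MvPolynomial (Fin 2) ℝ} :
    v ∈ polyVec2 l ↔ ∀ i, (v i).totalDegree ≤ l := by
  simp [polyVec2, Submodule.mem_pi, mem_restrictTotalDegree]

theorem totalDegree_xperp2_le (i : Fin 2) : (xperp2 i).totalDegree ≤ 1 := by
  fin_cases i <;> simp [xperp2, totalDegree_X]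

theorem sum_X_mul_xperp2 : ∑ i, X i * xperp2 i = 0 := by
  simp only [xperp2, Fin.sum_univ_two, Matrix.cons_val_zero, Matrix.cons_val_one]
  ring

theorem Gsp2_le_polyVec2 (l : ℕ) : Gsp2 l ≤ polyVec2 l := by
  rw [Gsp2, Submodule.span_le]
  rintro _ ⟨p, hp, rfl⟩
  rw [SetLike.mem_coe, mem_polyVec2]
  intro i
  have := totalDegree_pderiv_le i p
  omega

theorem Gcsp2_le_polyVec2 (l : ℕ) : Gcsp2 l ≤ polyVec2 l := by
  rw [Gcsp2, Submodule.span_le]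
  rintro _ ⟨q, hq, rfl⟩
  rw [SetLike.mem_coe, mem_polyVec2]
  intro i
  have := totalDegree_xperp2_le i
  exact (totalDegree_mul _ _).trans (by omega)

theorem exists_pderiv_eq_of_mem_Gsp2 {l : ℕ} {v : Fin 2 → MvPolynomial (Fin 2) ℝ}
    (hv : v ∈ Gsp2 l) : ∃ p, v = fun i => pderiv i p := by
  have hrange : Gsp2 l ≤ LinearMap.range (LinearMap.pi fun i => (pderiv i).toLinearMap) :=
    Submodule.span_le.mpr (by rintro _ ⟨p, -, rfl⟩; exact ⟨p, rfl⟩)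
  obtain ⟨p, rfl⟩ := hrange hv
  exact ⟨p, rfl⟩

theorem exists_xperp2_mul_eq_of_mem_Gcsp2 {l : ℕ} {v : Fin 2 → MvPolynomial (Fin 2) ℝ}
    (hv : v ∈ Gcsp2 l) : ∃ q, v = fun i => xperp2 i * q := by
  have hrange :
      Gcsp2 l ≤ LinearMap.range (LinearMap.pi fun i => LinearMap.mulLeft ℝ (xperp2 i)) :=
    Submodule.span_le.mpr (by rintro _ ⟨q, -, rfl⟩; exact ⟨q, rfl⟩)
  obtain ⟨q, rfl⟩ := hrange hv
  exact ⟨q, rfl⟩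

theorem xperp2_mul_mem_Gcsp2 {l : ℕ} {q : MvPolynomial (Fin 2) ℝ}
    (hq : (X 0 * q).totalDegree ≤ l) : (fun i => xperp2 i * q) ∈ Gcsp2 l := by
  rcases eq_or_ne q 0 with rfl | hq0
  · simp only [mul_zero]
    exact (Gcsp2 l).zero_mem
  · exact Submodule.subset_span ⟨q, by rwa [totalDegree_X_mul 0 hq0] at hq, rfl⟩

theorem exists_eq_pderiv_add_xperp2_mul {l : ℕ} {v : Fin 2 → MvPolynomial (Fin 2) ℝ}
    (hv : ∀ i, (v i).totalDegree ≤ l) :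
    ∃ p q : MvPolynomial (Fin 2) ℝ, p.totalDegree ≤ l + 1 ∧ (X 0 * q).totalDegree ≤ l ∧
      v = (fun i => pderiv i p) + fun i => xperp2 i * q := by
  set f := ∑ i, X i * v i
  have hf0 : constantCoeff f = 0 := by simp [f]
  have hfdeg : f.totalDegree ≤ l + 1 := totalDegree_finsetSum_le fun i _ =>
    (totalDegree_mul _ _).trans (by rw [totalDegree_X]; have := hv i; omega)
  obtain ⟨p, hpdeg, hp⟩ := exists_euler_eq hf0
  have hw : X 0 * (v 0 - pderiv 0 p) + X 1 * (v 1 - pderiv 1 p) = 0 := by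
    simp only [euler, f, Fin.sum_univ_two] at hp
    linear_combination -hp
  obtain ⟨q, hq0, hq1⟩ := exists_eq_neg_X_mul_and_eq_X_mul (by decide) hw
  refine ⟨p, q, hpdeg.trans hfdeg, ?_, ?_⟩
  · have := totalDegree_pderiv_le 1 p
    rw [← hq1]
    exact (totalDegree_sub _ _).trans (max_le (hv 1) (by omega))
  · funext i
    fin_cases i
    · simp only [Fin.zero_eta, xperp2, Pi.add_apply, Matrix.cons_val_zero]
      linear_combination hq0
    · simp only [Fin.mk_one, xperp2, Pi.add_apply, Matrix.cons_val_one, Matrix.cons_val_fin_one]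
      linear_combination hq1

theorem polyVec2_le_Gsp2_sup_Gcsp2 (l : ℕ) : polyVec2 l ≤ Gsp2 l ⊔ Gcsp2 l := by
  intro v hv
  obtain ⟨p, q, hp, hq, rfl⟩ := exists_eq_pderiv_add_xperp2_mul (mem_polyVec2.mp hv)
  exact Submodule.add_mem_sup (Submodule.subset_span ⟨p, hp, rfl⟩) (xperp2_mul_mem_Gcsp2 hq)

theorem Gsp2_inf_Gcsp2 (l : ℕ) : Gsp2 l ⊓ Gcsp2 l = ⊥ := by
  rw [eq_bot_iff]
  rintro v ⟨hg, hc⟩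
  obtain ⟨p, rfl⟩ := exists_pderiv_eq_of_mem_Gsp2 hg
  obtain ⟨q, hq⟩ := exists_xperp2_mul_eq_of_mem_Gcsp2 hc
  have hp : euler p = 0 :=
    calc euler p = ∑ i, X i * (xperp2 i * q) := by simp only [euler, congrFun hq]
      _ = (∑ i, X i * xperp2 i) * q := by simp only [Finset.sum_mul, mul_assoc]
      _ = 0 := by rw [sum_X_mul_xperp2, zero_mul]
  rw [Submodule.mem_bot]
  funext i
  rw [eq_C_of_euler_eq_zero hp, pderiv_C, Pi.zero_apply]

/-- For every `l ≥ 0`, the ℝ²-valued polynomial fields of degree ≤ l decompose as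
the direct sum 𝒢^l ⊕ 𝒢^{c,l}. -/
theorem polyVec2_eq_grad_directSum_gradComplement (l : ℕ) :
    Gsp2 l ⊔ Gcsp2 l = polyVec2 l ∧ Gsp2 l ⊓ Gcsp2 l = ⊥ :=
  ⟨le_antisymm (sup_le (Gsp2_le_polyVec2 l) (Gcsp2_le_polyVec2 l)) (polyVec2_le_Gsp2_sup_Gcsp2 l),
    Gsp2_inf_Gcsp2 l⟩
end

section
/- Let X, Q be finite-dimensional real inner product spaces, C : X → Y and G : Q → X linear maps with C ∘ G = 0, and suppose: (i) a Poincaré–Wirtinger type estimate ‖q‖_Q ≲ ‖G q‖_X holds for all q ∈ Q; (ii) a Poincaré estimate ‖ψ‖_X ≲ ‖C ψ‖_Y holds for all ψ orthogonal (in X) to the image of G; (iii) Ker C = Im G (exactness). Then the bilinear form A((w,r),(v,q)) := ⟨Cw, Cv⟩_Y + ⟨Gr, v⟩_X − ⟨Gq, w⟩_X satisfies the inf-sup condition: for all (w,r), the graph norm (‖w‖_X² + ‖Cw‖_Y² + ‖r‖_Q² + ‖Gr‖_X²)^{1/2} is bounded, up to a constant, by sup_{(v,q)≠0} A((w,r),(v,q))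 divided by the graph norm of (v,q). -/
set_option maxHeartbeats 1000000 in
/-- Abstract inf-sup condition for the DDR form `A((w,r),(v,q)) =
⟨Cw,Cv⟩ + ⟨Gr,v⟩ − ⟨Gq,w⟩` under a complex property `C∘G = 0`, exactness
`Ker C = Im G`, and Poincaré(–Wirtinger) inequalities, in graph norms. -/
theorem ddr_infsup
    {X Y Q : Type*}
    [NormedAddCommGroup X] [InnerProductSpace ℝ X] [FiniteDimensional ℝ X]
    [NormedAddCommGroup Y] [InnerProductSpace ℝ Y] [FiniteDimensional ℝ Y]
    [NormedAddCommGroup Q] [InnerProductSpace ℝ Q] [FiniteDimensional ℝ Q]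
    (C : X →ₗ[ℝ] Y) (G : Q →ₗ[ℝ] X)
    (hCG : ∀ q, C (G q) = 0)
    (C₁ : ℝ) (hC₁ : 0 < C₁) (hPW : ∀ q : Q, ‖q‖ ≤ C₁ * ‖G q‖)
    (C₂ : ℝ) (hC₂ : 0 < C₂)
    (hP : ∀ ψ ∈ (LinearMap.range G)ᗮ, ‖ψ‖ ≤ C₂ * ‖C ψ‖)
    (hex : LinearMap.ker C = LinearMap.range G)
    (A : X × Q → X × Q → ℝ)
    (hA : ∀ w r v q, A (w, r) (v, q) =
      (inner ℝ (C w) (C v) : ℝ) + (inner ℝ (G r) v : ℝ) - (inner ℝ (G q) w : ℝ)) :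
    ∃ K : ℝ, 0 < K ∧ ∀ w r,
      Real.sqrt (‖w‖ ^ 2 + ‖C w‖ ^ 2 + ‖r‖ ^ 2 + ‖G r‖ ^ 2) ≤
        K * ⨆ p : {p : X × Q // p ≠ 0},
          A (w, r) p.1 /
            Real.sqrt (‖p.1.1‖ ^ 2 + ‖C p.1.1‖ ^ 2 + ‖p.1.2‖ ^ 2 + ‖G p.1.2‖ ^ 2) := by
  -- constants
  set c₁ : ℝ := Real.sqrt (C₁ ^ 2 + 1) with hc₁def
  set c₂ : ℝ := Real.sqrt (C₂ ^ 2 + 1) with hc₂def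
  have hc₁ : 0 < c₁ := Real.sqrt_pos.2 (by positivity)
  have hc₂ : 0 < c₂ := Real.sqrt_pos.2 (by positivity)
  refine ⟨c₁ + c₂ + C₂ * c₂ + C₁ + 1, by positivity, fun w r => ?_⟩
  -- the norm function
  set N : X × Q → ℝ := fun p =>
    Real.sqrt (‖p.1‖ ^ 2 + ‖C p.1‖ ^ 2 + ‖p.2‖ ^ 2 + ‖G p.2‖ ^ 2) with hNdef
  have hNnonneg : ∀ p, 0 ≤ N p := fun p => Real.sqrt_nonneg _
  have sqrt_ge : ∀ x y : ℝ, 0 ≤ x → x ^ 2 ≤ y → x ≤ Real.sqrt y := by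
    intro x y hx h
    calc x = Real.sqrt (x ^ 2) := (Real.sqrt_sq hx).symm
      _ ≤ Real.sqrt y := Real.sqrt_le_sqrt h
  have hN1 : ∀ p : X × Q, ‖p.1‖ ≤ N p := fun p =>
    sqrt_ge _ _ (norm_nonneg _) (by nlinarith [sq_nonneg ‖C p.1‖, sq_nonneg ‖p.2‖, sq_nonneg ‖G p.2‖])
  have hN2 : ∀ p : X × Q, ‖C p.1‖ ≤ N p := fun p =>
    sqrt_ge _ _ (norm_nonneg _) (by nlinarith [sq_nonneg ‖p.1‖, sq_nonneg ‖p.2‖, sq_nonneg ‖G p.2‖])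
  have hN4 : ∀ p : X × Q, ‖G p.2‖ ≤ N p := fun p =>
    sqrt_ge _ _ (norm_nonneg _) (by nlinarith [sq_nonneg ‖C p.1‖, sq_nonneg ‖p.2‖, sq_nonneg ‖p.1‖])
  have hNpos : ∀ p : X × Q, p ≠ 0 → 0 < N p := by
    intro p hp
    have h : p.1 ≠ 0 ∨ p.2 ≠ 0 := by
      by_contra h
      push_neg at h
      exact hp (Prod.ext h.1 h.2)
    apply Real.sqrt_pos.2
    rcases h with h | h
    · have := norm_pos_iff.2 h
      nlinarith [sq_nonneg ‖C p.1‖, sq_nonneg ‖p.2‖, sq_nonneg ‖G p.2‖]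
    · have := norm_pos_iff.2 h
      nlinarith [sq_nonneg ‖C p.1‖, sq_nonneg ‖p.1‖, sq_nonneg ‖G p.2‖]
  -- boundedness of the test family
  have hAbound : ∀ p : X × Q, A (w, r) p ≤ (‖C w‖ + ‖G r‖ + ‖w‖) * N p := by
    intro p
    have h1 := real_inner_le_norm (C w) (C p.1)
    have h2 := real_inner_le_norm (G r) p.1
    have h3 := abs_real_inner_le_norm (G p.2) w
    have h3' : -(‖G p.2‖ * ‖w‖) ≤ (inner ℝ (G p.2) w : ℝ) := neg_le_of_abs_le h3
    have e1 : ‖C w‖ * ‖C p.1‖ ≤ ‖C w‖ * N p :=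
      mul_le_mul_of_nonneg_left (hN2 p) (norm_nonneg _)
    have e2 : ‖G r‖ * ‖p.1‖ ≤ ‖G r‖ * N p :=
      mul_le_mul_of_nonneg_left (hN1 p) (norm_nonneg _)
    have e3 : ‖G p.2‖ * ‖w‖ ≤ ‖w‖ * N p := by
      calc ‖G p.2‖ * ‖w‖ = ‖w‖ * ‖G p.2‖ := mul_comm _ _
        _ ≤ ‖w‖ * N p := mul_le_mul_of_nonneg_left (hN4 p) (norm_nonneg _)
    have := hA w r p.1 p.2
    rw [show ((p.1, p.2) : X × Q) = p from rfl] at this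
    rw [this]
    nlinarith
  set f : {p : X × Q // p ≠ 0} → ℝ := fun p => A (w, r) p.1 / N p.1 with hfdef
  have hbdd : BddAbove (Set.range f) := by
    refine ⟨‖C w‖ + ‖G r‖ + ‖w‖, ?_⟩
    rintro x ⟨p, rfl⟩
    have hNp := hNpos p.1 p.2
    exact (div_le_iff₀ hNp).2 (hAbound p.1)
  set S : ℝ := ⨆ p : {p : X × Q // p ≠ 0}, f p with hSdef
  have hle : ∀ p : {p : X × Q // p ≠ 0}, f p ≤ S := fun p => le_ciSup hbdd p
  show Real.sqrt (‖w‖ ^ 2 + ‖C w‖ ^ 2 + ‖r‖ ^ 2 + ‖G r‖ ^ 2) ≤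
    (c₁ + c₂ + C₂ * c₂ + C₁ + 1) * S
  by_cases htriv : ∀ p : X × Q, p = 0
  · -- degenerate case
    have hw : w = 0 := congrArg Prod.fst (htriv (w, r))
    have hr : r = 0 := congrArg Prod.snd (htriv (w, r))
    have : IsEmpty {p : X × Q // p ≠ 0} := ⟨fun p => p.2 (htriv p.1)⟩
    have hS0 : S = 0 := Real.iSup_of_isEmpty f
    rw [hS0, hw, hr]
    simp
  · push_neg at htriv
    obtain ⟨p₀, hp₀⟩ := htriv
    -- S ≥ 0
    have hAneg : ∀ v q, A (w, r) (-v, -q) = -A (w, r) (v, q) := by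
      intro v q
      rw [hA w r (-v) (-q), hA w r v q]
      simp only [map_neg, inner_neg_left, inner_neg_right]
      ring
    have hSnn : 0 ≤ S := by
      have h1 := hle ⟨p₀, hp₀⟩
      have h2 := hle ⟨-p₀, neg_ne_zero.2 hp₀⟩
      have hNneg : N (-p₀) = N p₀ := by
        simp only [hNdef, Prod.fst_neg, Prod.snd_neg, norm_neg, map_neg]
      have hAe : A (w, r) (-p₀) = -A (w, r) p₀ := by
        have := hAneg p₀.1 p₀.2
        exact this
      simp only [hfdef] at h1 h2
      rw [hAe, hNneg, neg_div] at h2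
      linarith
    -- generic test inequality
    have test : ∀ (v : X) (q : Q), (h : (v, q) ≠ (0 : X × Q)) →
        A (w, r) (v, q) / N (v, q) ≤ S := fun v q h => hle ⟨(v, q), h⟩
    -- Bound 1 : ‖G r‖ ≤ S
    have hGr : ‖G r‖ ≤ S := by
      by_cases hz : G r = 0
      · rw [hz, norm_zero]; exact hSnn
      · have hne : ((G r, 0) : X × Q) ≠ 0 := by
          simp [Prod.ext_iff, hz]
        have hAeq : A (w, r) (G r, 0) = ‖G r‖ ^ 2 := by
          rw [hA, hCG, map_zero, inner_zero_right, inner_zero_left,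
            real_inner_self_eq_norm_sq]
          ring
        have hNeq : N (G r, 0) = ‖G r‖ := by
          simp only [hNdef, hCG, norm_zero, map_zero]
          rw [show ‖G r‖ ^ 2 + 0 ^ 2 + 0 ^ 2 + 0 ^ 2 = ‖G r‖ ^ 2 by ring,
            Real.sqrt_sq (norm_nonneg _)]
        have := test (G r) 0 hne
        rw [hAeq, hNeq] at this
        have hpos : (0:ℝ) < ‖G r‖ := norm_pos_iff.2 hz
        rw [pow_two, mul_div_assoc, div_self (ne_of_gt hpos), mul_one] at this
        exact this
    -- Bound 2 : ‖r‖ ≤ C₁ S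
    have hr : ‖r‖ ≤ C₁ * S :=
      le_trans (hPW r) (mul_le_mul_of_nonneg_left hGr (le_of_lt hC₁))
    -- orthogonal decomposition of w
    set V : Submodule ℝ X := LinearMap.range G with hVdef
    set u : X := (V.orthogonalProjectionOnto w : X) with hudef
    set ψ : X := w - u with hψdef
    have huV : u ∈ V := (V.orthogonalProjectionOnto w).2
    have hψorth : ψ ∈ Vᗮ := Submodule.sub_starProjection_mem_orthogonal (K := V) w
    have hCu : C u = 0 := by
      have : u ∈ LinearMap.ker C := hex ▸ huV
      exact this
    have hCψ : C ψ = C w := by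
      rw [hψdef, map_sub, hCu, sub_zero]
    have hψP : ‖ψ‖ ≤ C₂ * ‖C w‖ := by
      have := hP ψ hψorth
      rwa [hCψ] at this
    -- Bound 3 : ‖C w‖ ≤ c₂ S
    have hCw : ‖C w‖ ≤ c₂ * S := by
      by_cases hz : C w = 0
      · rw [hz, norm_zero]; positivity
      · have hψne : ψ ≠ 0 := by
          intro h
          rw [h, map_zero] at hCψ
          exact hz hCψ.symm
        have hne : ((ψ, 0) : X × Q) ≠ 0 := by simp [Prod.ext_iff, hψne]
        have hGrψ : (inner ℝ (G r) ψ : ℝ) = 0 :=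
          (Submodule.mem_orthogonal V ψ).1 hψorth (G r) ⟨r, rfl⟩
        have hAeq : A (w, r) (ψ, 0) = ‖C w‖ ^ 2 := by
          rw [hA, hCψ, real_inner_self_eq_norm_sq, hGrψ, map_zero, inner_zero_left]
          ring
        have hCwpos : (0:ℝ) < ‖C w‖ := norm_pos_iff.2 hz
        have hNle : N (ψ, 0) ≤ c₂ * ‖C w‖ := by
          have h1 : ‖ψ‖ ^ 2 ≤ C₂ ^ 2 * ‖C w‖ ^ 2 := by nlinarith [norm_nonneg ψ]
          have : N (ψ, 0) ≤ Real.sqrt ((C₂ ^ 2 + 1) * ‖C w‖ ^ 2) := by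
            apply Real.sqrt_le_sqrt
            simp only [hCψ, norm_zero, map_zero]
            nlinarith
          calc N (ψ, 0) ≤ Real.sqrt ((C₂ ^ 2 + 1) * ‖C w‖ ^ 2) := this
            _ = c₂ * ‖C w‖ := by
              rw [Real.sqrt_mul (by positivity), Real.sqrt_sq (norm_nonneg _)]
        have hNp : 0 < N (ψ, 0) := hNpos _ hne
        have step : ‖C w‖ ^ 2 / (c₂ * ‖C w‖) ≤ ‖C w‖ ^ 2 / N (ψ, 0) :=
          div_le_div_of_nonneg_left (by positivity) hNp hNle
        have hT : A (w, r) (ψ, 0) / N (ψ, 0) ≤ S := test ψ 0 hne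
        rw [hAeq] at hT
        have := le_trans step hT
        rw [pow_two, show c₂ * ‖C w‖ = ‖C w‖ * c₂ by ring,
          mul_div_mul_left _ _ (ne_of_gt hCwpos)] at this
        calc ‖C w‖ = c₂ * (‖C w‖ / c₂) := by field_simp
          _ ≤ c₂ * S := mul_le_mul_of_nonneg_left this (le_of_lt hc₂)
    -- Bound 4 : ‖u‖ ≤ c₁ S
    have hu : ‖u‖ ≤ c₁ * S := by
      by_cases hz : u = 0
      · rw [hz, norm_zero]; positivity
      · obtain ⟨s, hs⟩ := huV
        have hsne : s ≠ 0 := by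
          intro h; rw [h, map_zero] at hs; exact hz hs.symm
        have hne : ((0, -s) : X × Q) ≠ 0 := by simp [Prod.ext_iff, hsne]
        have hGsψ : (inner ℝ (G s) ψ : ℝ) = 0 :=
          (Submodule.mem_orthogonal V ψ).1 hψorth (G s) ⟨s, rfl⟩
        have huψ : (inner ℝ u ψ : ℝ) = 0 := by rw [← hs]; exact hGsψ
        have hAeq : A (w, r) (0, -s) = ‖u‖ ^ 2 := by
          rw [hA, map_zero, inner_zero_right, inner_zero_right, map_neg,
            inner_neg_left, hs]
          have hw : w = u + ψ := by rw [hψdef]; abel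
          rw [hw, inner_add_right, huψ, real_inner_self_eq_norm_sq]
          ring
        have hupos : (0:ℝ) < ‖u‖ := norm_pos_iff.2 hz
        have hNle : N (0, -s) ≤ c₁ * ‖u‖ := by
          have hsn : ‖s‖ ≤ C₁ * ‖u‖ := by
            have := hPW s; rwa [hs] at this
          have : N (0, -s) ≤ Real.sqrt ((C₁ ^ 2 + 1) * ‖u‖ ^ 2) := by
            apply Real.sqrt_le_sqrt
            simp only [norm_zero, map_zero, map_neg, norm_neg, hs]
            nlinarith [norm_nonneg s, norm_nonneg u]
          calc N (0, -s) ≤ Real.sqrt ((C₁ ^ 2 + 1) * ‖u‖ ^ 2) := this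
            _ = c₁ * ‖u‖ := by
              rw [Real.sqrt_mul (by positivity), Real.sqrt_sq (norm_nonneg _)]
        have hNp : 0 < N (0, -s) := hNpos _ hne
        have step : ‖u‖ ^ 2 / (c₁ * ‖u‖) ≤ ‖u‖ ^ 2 / N (0, -s) :=
          div_le_div_of_nonneg_left (by positivity) hNp hNle
        have hT : A (w, r) (0, -s) / N (0, -s) ≤ S := test 0 (-s) hne
        rw [hAeq] at hT
        have := le_trans step hT
        rw [pow_two, show c₁ * ‖u‖ = ‖u‖ * c₁ by ring,
          mul_div_mul_left _ _ (ne_of_gt hupos)] at this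
        calc ‖u‖ = c₁ * (‖u‖ / c₁) := by field_simp
          _ ≤ c₁ * S := mul_le_mul_of_nonneg_left this (le_of_lt hc₁)
    -- Bound on ‖w‖
    have hwb : ‖w‖ ≤ (c₁ + C₂ * c₂) * S := by
      have : ‖w‖ ≤ ‖u‖ + ‖ψ‖ := by
        calc ‖w‖ = ‖u + ψ‖ := by rw [hψdef, add_sub_cancel]
          _ ≤ ‖u‖ + ‖ψ‖ := norm_add_le _ _
      have hψb : ‖ψ‖ ≤ C₂ * (c₂ * S) :=
        le_trans hψP (mul_le_mul_of_nonneg_left hCw (le_of_lt hC₂))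
      nlinarith
    -- Assemble
    have hsum : Real.sqrt (‖w‖ ^ 2 + ‖C w‖ ^ 2 + ‖r‖ ^ 2 + ‖G r‖ ^ 2) ≤
        ‖w‖ + ‖C w‖ + ‖r‖ + ‖G r‖ := by
      have h1 : ‖w‖ ^ 2 + ‖C w‖ ^ 2 + ‖r‖ ^ 2 + ‖G r‖ ^ 2 ≤
          (‖w‖ + ‖C w‖ + ‖r‖ + ‖G r‖) ^ 2 := by
        nlinarith [norm_nonneg w, norm_nonneg (C w), norm_nonneg r, norm_nonneg (G r),
          mul_nonneg (norm_nonneg w) (norm_nonneg (C w)),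
          mul_nonneg (norm_nonneg w) (norm_nonneg r),
          mul_nonneg (norm_nonneg w) (norm_nonneg (G r)),
          mul_nonneg (norm_nonneg (C w)) (norm_nonneg r),
          mul_nonneg (norm_nonneg (C w)) (norm_nonneg (G r)),
          mul_nonneg (norm_nonneg r) (norm_nonneg (G r))]
      calc Real.sqrt (‖w‖ ^ 2 + ‖C w‖ ^ 2 + ‖r‖ ^ 2 + ‖G r‖ ^ 2)
          ≤ Real.sqrt ((‖w‖ + ‖C w‖ + ‖r‖ + ‖G r‖) ^ 2) := Real.sqrt_le_sqrt h1
        _ = ‖w‖ + ‖C w‖ + ‖r‖ + ‖G r‖ := Real.sqrt_sq (by positivity)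
    calc Real.sqrt (‖w‖ ^ 2 + ‖C w‖ ^ 2 + ‖r‖ ^ 2 + ‖G r‖ ^ 2)
        ≤ ‖w‖ + ‖C w‖ + ‖r‖ + ‖G r‖ := hsum
      _ ≤ (c₁ + C₂ * c₂) * S + c₂ * S + C₁ * S + S := by linarith
      _ ≤ (c₁ + c₂ + C₂ * c₂ + C₁ + 1) * S := by nlinarith
end

section
/- Abstract discrete pressure-robustness: let X, Q be finite-dimensional inner product spaces, G : Q₀ → X linear (Q₀ a codimension-one subspace of Q fixed by a zero-mean condition), and let the discrete problem be a(u,v) + ⟨Gp, v⟩ = ⟨I f, v⟩ for all v ∈ X and ⟨Gq, u⟩ = 0 for all q ∈ Q₀, with a positive semidefinite and the pair well-posed. If the right-hand side interpolant satisfies the commutation I(∇ψ) = G(J ψ) for an interpolant J into Q (shifted into Q₀ by a constant), then replacing f by f + ∇ψ leaves the discrete velocity u unchanged and changes the discrete pressure by J ψ + constant. -/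
/-!
The commutation `I (∇ψ) = G (J ψ)` turns the extra load `I (∇ψ)` into a discrete pressure
gradient, which the pressure absorbs by the shift `J ψ`; since the gradient of a constant
vanishes, the same commutation gives `G (J 1) = 0`, so the constant restoring the zero-mean
constraint is invisible to the momentum equation. The mass equation does not see the load.
-/

noncomputable def pd3 (i : Fin 3) (f : (Fin 3 → ℝ) → ℝ) (x : Fin 3 → ℝ) : ℝ :=
  fderiv ℝ f x (Pi.single i 1)

noncomputable def vgrad3 (f : (Fin 3 → ℝ) → ℝ) (x : Fin 3 → ℝ) : Fin 3 → ℝ :=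
  fun i => pd3 i f x

theorem vgrad3_const (c : ℝ) : vgrad3 (fun _ => c) = 0 := by
  funext x i
  simp [vgrad3, pd3]

theorem apply_interp_const_eq_zero_of_commute {X Q : Type*} [AddGroup X]
    (G : Q → X) (I : ((Fin 3 → ℝ) → (Fin 3 → ℝ)) → X)
    (J : ((Fin 3 → ℝ) → ℝ) → Q) (hIadd : ∀ f g, I (f + g) = I f + I g)
    (hcomm : ∀ ψ : (Fin 3 → ℝ) → ℝ, I (fun x => vgrad3 ψ x) = G (J ψ)) (c : ℝ) :
    G (J fun _ => c) = 0 := by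
  rw [← hcomm, vgrad3_const]
  exact (AddMonoidHom.mk' I hIadd).map_zero

theorem momentum_add_pressure {X Q : Type*}
    [NormedAddCommGroup X] [InnerProductSpace ℝ X] [AddCommGroup Q] [Module ℝ Q]
    (a : X →ₗ[ℝ] X →ₗ[ℝ] ℝ) (G : Q →ₗ[ℝ] X) {u g : X} {p : Q}
    (hmom : ∀ v, a u v + inner ℝ (G p) v = inner ℝ g v) (r : Q) (v : X) :
    a u v + inner ℝ (G (p + r)) v = inner ℝ (g + G r) v := by
  rw [map_add, inner_add_left, inner_add_left, ← hmom v, add_assoc]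

theorem discrete_pressure_robustness_general
    {X Q : Type*}
    [NormedAddCommGroup X] [InnerProductSpace ℝ X]
    [NormedAddCommGroup Q] [InnerProductSpace ℝ Q]
    (Q₀ : Submodule ℝ Q) (G : Q →ₗ[ℝ] X)
    (a : X →ₗ[ℝ] X →ₗ[ℝ] ℝ)
    (I : ((Fin 3 → ℝ) → (Fin 3 → ℝ)) → X) (J : ((Fin 3 → ℝ) → ℝ) → Q)
    (hIadd : ∀ f g, I (f + g) = I f + I g)
    (hcomm : ∀ ψ : (Fin 3 → ℝ) → ℝ, I (fun x => vgrad3 ψ x) = G (J ψ))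
    (hshift : ∀ r : Q, ∃ c : ℝ, r + c • J (fun _ => 1) ∈ Q₀)
    (f : (Fin 3 → ℝ) → (Fin 3 → ℝ)) (ψ : (Fin 3 → ℝ) → ℝ)
    (u : X) (p : Q)
    (hmom : ∀ v : X, a u v + (inner ℝ (G p) v : ℝ) = (inner ℝ (I f) v : ℝ))
    (hmass : ∀ q ∈ Q₀, (inner ℝ (G q) u : ℝ) = 0) :
    ∃ c : ℝ, (p + J ψ + c • J (fun _ => 1)) ∈ Q₀ ∧
      (∀ v : X, a u v + (inner ℝ (G (p + J ψ + c • J (fun _ => 1))) v : ℝ)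
        = (inner ℝ (I (f + fun x => vgrad3 ψ x)) v : ℝ)) ∧
      (∀ q ∈ Q₀, (inner ℝ (G q) u : ℝ) = 0) := by
  obtain ⟨c, hc⟩ := hshift (p + J ψ)
  have hconst : G (J fun _ => 1) = 0 :=
    apply_interp_const_eq_zero_of_commute G I J hIadd hcomm 1
  have hload : G (J ψ + c • J fun _ => 1) = G (J ψ) := by
    rw [map_add, map_smul, hconst, smul_zero, add_zero]
  refine ⟨c, hc, fun v => ?_, hmass⟩
  rw [add_assoc p, hIadd, hcomm, ← hload]
  exact momentum_add_pressure a G hmom _ v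

/-- Abstract discrete pressure-robustness: if the interpolants satisfy the
commutation `I(∇ψ) = G(Jψ)` and the zero-mean subspace `Q₀` can be reached by
shifting with the interpolated constant, then replacing `f` by `f + ∇ψ` leaves
the discrete velocity unchanged and changes the discrete pressure by
`Jψ + constant`. -/
theorem discrete_pressure_robustness
    {X Q : Type*}
    [NormedAddCommGroup X] [InnerProductSpace ℝ X] [FiniteDimensional ℝ X]
    [NormedAddCommGroup Q] [InnerProductSpace ℝ Q] [FiniteDimensional ℝ Q]
    (Q₀ : Submodule ℝ Q) (G : Q →ₗ[ℝ] X)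
    (a : X →ₗ[ℝ] X →ₗ[ℝ] ℝ) (hpsd : ∀ v, 0 ≤ a v v)
    (I : ((Fin 3 → ℝ) → (Fin 3 → ℝ)) → X) (J : ((Fin 3 → ℝ) → ℝ) → Q)
    (hIadd : ∀ f g, I (f + g) = I f + I g)
    (hcomm : ∀ ψ : (Fin 3 → ℝ) → ℝ, I (fun x => vgrad3 ψ x) = G (J ψ))
    (hshift : ∀ r : Q, ∃ c : ℝ, r + c • J (fun _ => 1) ∈ Q₀)
    (hwp : ∀ g : X, ∃! up : X × Q₀,
      (∀ v : X, a up.1 v + (inner ℝ (G (up.2 : Q)) v : ℝ) = (inner ℝ g v : ℝ)) ∧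
      (∀ q ∈ Q₀, (inner ℝ (G q) up.1 : ℝ) = 0))
    (f : (Fin 3 → ℝ) → (Fin 3 → ℝ)) (ψ : (Fin 3 → ℝ) → ℝ)
    (u : X) (p : Q) (hp : p ∈ Q₀)
    (hmom : ∀ v : X, a u v + (inner ℝ (G p) v : ℝ) = (inner ℝ (I f) v : ℝ))
    (hmass : ∀ q ∈ Q₀, (inner ℝ (G q) u : ℝ) = 0) :
    ∃ c : ℝ, (p + J ψ + c • J (fun _ => 1)) ∈ Q₀ ∧
      (∀ v : X, a u v + (inner ℝ (G (p + J ψ + c • J (fun _ => 1))) v : ℝ)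
        = (inner ℝ (I (f + fun x => vgrad3 ψ x)) v : ℝ)) ∧
      (∀ q ∈ Q₀, (inner ℝ (G q) u : ℝ) = 0) :=
  discrete_pressure_robustness_general Q₀ G a I J hIadd hcomm hshift f ψ u p hmom hmass
end

section
/- For q ∈ 𝒢^{c,k+1}(T) = x_T × 𝒫^k(T)³ and a planar face F of T with normal n_F, the tangential trace q|_F × n_F belongs to 𝒫^k(F)² + x_F 𝒫^k(F), the two-dimensional Raviart–Thomas-type space. -/
open MvPolynomial

private theorem fin3_mk_two (h : 2 < 3) : (⟨2, h⟩ : Fin 3) = 2 := rfl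

/-- Euclidean dot product on `ℝ³`. -/
def dotR (a b : Fin 3 → ℝ) : ℝ := ∑ i, a i * b i

/-- Evaluation of a polynomial vector field at a point of `ℝ³`. -/
noncomputable def evalVec (v : Fin 3 → MvPolynomial (Fin 3) ℝ) (x : Fin 3 → ℝ) :
    Fin 3 → ℝ := fun i => MvPolynomial.eval x (v i)

/-- For a polynomial field `v` of degree ≤ k, the tangential trace
`((x − c_T) × v) × n_F` on the plane `F = {x : (x − c_F)·n_F = 0}` belongs to
`𝒫^k(F)² + x_F 𝒫^k(F)`: it agrees on `F` with `q + r·(x − c_F)` where `q` is a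
tangential polynomial field of degree ≤ k and `r` a scalar polynomial of degree
≤ k. -/
theorem cross_trace_in_raviart_thomas
    (k : ℕ) (cT cF n : Fin 3 → ℝ) (hn : dotR n n = 1)
    (v : Fin 3 → MvPolynomial (Fin 3) ℝ) (hv : ∀ i, (v i).totalDegree ≤ k) :
    ∃ (q : Fin 3 → MvPolynomial (Fin 3) ℝ) (r : MvPolynomial (Fin 3) ℝ),
      (∀ i, (q i).totalDegree ≤ k) ∧ r.totalDegree ≤ k ∧
      (∀ x : Fin 3 → ℝ, dotR (x - cF) n = 0 → dotR (evalVec q x) n = 0) ∧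
      (∀ x : Fin 3 → ℝ, dotR (x - cF) n = 0 →
        crossProduct (crossProduct (x - cT) (evalVec v x)) n
          = evalVec q x + MvPolynomial.eval x r • (x - cF)) := by
  classical
  set c : ℝ := dotR (cF - cT) n with hc
  set vn : MvPolynomial (Fin 3) ℝ := ∑ i, C (n i) * v i with hvn
  have hvndeg : vn.totalDegree ≤ k := by
    refine le_trans (totalDegree_finset_sum _ _) ?_
    refine Finset.sup_le fun i _ => ?_
    calc (C (n i) * v i).totalDegree ≤ (C (n i)).totalDegree + (v i).totalDegree :=
          totalDegree_mul _ _
      _ ≤ k := by simpa [totalDegree_C] using hv i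
  refine ⟨fun i => C c * v i - C (cF i - cT i) * vn, -vn, ?_, ?_, ?_, ?_⟩
  · intro i
    refine le_trans (totalDegree_sub _ _) (max_le ?_ ?_)
    · calc (C c * v i).totalDegree ≤ (C c).totalDegree + (v i).totalDegree :=
            totalDegree_mul _ _
        _ ≤ k := by simpa [totalDegree_C] using hv i
    · calc (C (cF i - cT i) * vn).totalDegree
            ≤ (C (cF i - cT i)).totalDegree + vn.totalDegree := totalDegree_mul _ _
        _ ≤ k := by simpa only [totalDegree_C, zero_add] using hvndeg
  · simpa using hvndeg
  · intro x hx
    have hev : MvPolynomial.eval x vn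
        = n 0 * MvPolynomial.eval x (v 0) + n 1 * MvPolynomial.eval x (v 1)
          + n 2 * MvPolynomial.eval x (v 2) := by
      simp [hvn, Fin.sum_univ_three]
    have hcc : c = (cF 0 - cT 0) * n 0 + (cF 1 - cT 1) * n 1 + (cF 2 - cT 2) * n 2 := by
      simp [hc, dotR, Fin.sum_univ_three]
    simp only [dotR, evalVec, Fin.sum_univ_three, map_sub, map_mul, eval_C, hev, hcc]
    ring
  · intro x hx
    have hev : MvPolynomial.eval x vn
        = n 0 * MvPolynomial.eval x (v 0) + n 1 * MvPolynomial.eval x (v 1)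
          + n 2 * MvPolynomial.eval x (v 2) := by
      simp [hvn, Fin.sum_univ_three]
    have hcc : c = (cF 0 - cT 0) * n 0 + (cF 1 - cT 1) * n 1 + (cF 2 - cT 2) * n 2 := by
      simp [hc, dotR, Fin.sum_univ_three]
    simp only [dotR, Fin.sum_univ_three, Pi.sub_apply] at hx
    funext i
    rw [cross_apply, cross_apply]
    fin_cases i <;>
      simp only [evalVec, Matrix.cons_val_zero, Matrix.cons_val_one, Matrix.head_cons,
        Matrix.cons_val_two, Matrix.tail_cons, Pi.add_apply, Pi.sub_apply,
        Pi.smul_apply, smul_eq_mul, map_sub, map_mul, map_neg, eval_C, hev, hcc,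
        Fin.isValue, Fin.mk_zero, Fin.mk_one, fin3_mk_two]
    · linear_combination (MvPolynomial.eval x (v 0)) * hx
    · linear_combination (MvPolynomial.eval x (v 1)) * hx
    · linear_combination (MvPolynomial.eval x (v 2)) * hx
end

section
/- Let X, Y, Q be finite-dimensional inner product spaces with linear maps G : Q → X and C : X → Y satisfying C∘G = 0, Ker C = Im G, the Poincaré–Wirtinger inequality ‖q‖ ≤ C_P ‖Gq‖ for q in the orthogonal complement of Ker G, and Poincaré inequality ‖ψ‖ ≤ C_C ‖Cψ‖ for ψ ⟂ Ker C. Then the mixed problem: find (u,p) ∈ X × Q₀ (Q₀ := (Ker G)^⊥) with ⟨Cu, Cv⟩ + ⟨Gp, v⟩ = L(v) for all v ∈ X and ⟨Gq, u⟩ = 0 for all q ∈ Q₀, has a unique solution for every linear functional L on X. -/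
/-!
The mixed problem says `a ((u, p), ·) = L ∘ fst` for the symmetric form
`a ((u, p), (v, q)) = ⟪C u, C v⟫ + ⟪G p, v⟫ + ⟪G q, u⟫` on `X × Q₀`, `Q₀ = (Ker G)ᗮ`.
In finite dimension existence follows from uniqueness, i.e. from `a` separating points:
if `a ((u, p), ·) = 0`, testing with `(0, q)` gives `u ⟂ Im G`, then testing with `(u, 0)`
gives `C u = 0`, so `u ∈ Ker C = Im G` is orthogonal to itself; finally `G p = 0` and
`p ⟂ Ker G` force `p = 0`.
-/

open LinearMap (BilinForm ker range)
open scoped InnerProductSpace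

theorem LinearMap.SeparatingLeft.existsUnique_apply_eq {K V : Type*} [Field K]
    [AddCommGroup V] [Module K V] [FiniteDimensional K V] {B : BilinForm K V}
    (hB : B.SeparatingLeft) (f : Module.Dual K V) : ∃! v, B v = f := by
  have hinj : Function.Injective B := by
    rwa [← LinearMap.ker_eq_bot, ← LinearMap.separatingLeft_iff_ker_eq_bot]
  have hbij : Function.Bijective B :=
    ⟨hinj, (LinearMap.injective_iff_surjective_of_finrank_eq_finrank
      Subspace.dual_finrank_eq.symm).1 hinj⟩
  exact hbij.existsUnique f

section Stokes

variable {X Y P : Type*}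
  [NormedAddCommGroup X] [InnerProductSpace ℝ X]
  [NormedAddCommGroup Y] [InnerProductSpace ℝ Y]
  [NormedAddCommGroup P] [InnerProductSpace ℝ P]

noncomputable def stokesForm (G : P →ₗ[ℝ] X) (C : X →ₗ[ℝ] Y) : BilinForm ℝ (X × P) :=
  LinearMap.mk₂ ℝ (fun z w => ⟪C z.1, C w.1⟫_ℝ + ⟪G z.2, w.1⟫_ℝ + ⟪G w.2, z.1⟫_ℝ)
    (fun _ _ _ => by simp only [Prod.fst_add, Prod.snd_add, map_add, inner_add_left,
      inner_add_right]; ring)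
    (fun _ _ _ => by simp [inner_smul_left, inner_smul_right]; ring)
    (fun _ _ _ => by simp only [Prod.fst_add, Prod.snd_add, map_add, inner_add_left,
      inner_add_right]; ring)
    (fun _ _ _ => by simp [inner_smul_left, inner_smul_right]; ring)

variable (G : P →ₗ[ℝ] X) (C : X →ₗ[ℝ] Y)

@[simp]
theorem stokesForm_apply (z w : X × P) :
    stokesForm G C z w = ⟪C z.1, C w.1⟫_ℝ + ⟪G z.2, w.1⟫_ℝ + ⟪G w.2, z.1⟫_ℝ :=
  rfl

theorem stokesForm_eq_comp_fst_iff (L : X →ₗ[ℝ] ℝ) (z : X × P) :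
    stokesForm G C z = L ∘ₗ LinearMap.fst ℝ X P ↔
      (∀ v, ⟪C z.1, C v⟫_ℝ + ⟪G z.2, v⟫_ℝ = L v) ∧ ∀ q, ⟪G q, z.1⟫_ℝ = 0 := by
  refine ⟨fun h => ⟨fun v => ?_, fun q => ?_⟩, fun ⟨h₁, h₂⟩ => LinearMap.ext fun w => ?_⟩
  · simpa using LinearMap.congr_fun h (v, 0)
  · simpa using LinearMap.congr_fun h (0, q)
  · simp [h₁, h₂]

variable {G C}

theorem separatingLeft_stokesForm (hG : Function.Injective G) (hex : ker C ≤ range G) :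
    (stokesForm G C).SeparatingLeft := by
  rintro ⟨u, p⟩ h
  have hu_perp : ∀ q, ⟪G q, u⟫_ℝ = 0 := fun q => by simpa using h (0, q)
  have hCu : C u = 0 := by
    have := h (u, 0)
    simp only [stokesForm_apply, map_zero, inner_zero_left, add_zero] at this
    rwa [real_inner_comm, hu_perp, add_zero, inner_self_eq_zero] at this
  have hu : u = 0 := by
    obtain ⟨q, rfl⟩ := hex hCu
    exact inner_self_eq_zero.1 (hu_perp q)
  have hGp : G p = 0 := by
    refine ext_inner_right ℝ fun v => ?_
    simpa [hu] using h (v, 0)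
  simp [hu, hG (hGp.trans (map_zero G).symm)]

end Stokes

section OrthogonalKer

variable {Q X : Type*} [NormedAddCommGroup Q] [InnerProductSpace ℝ Q]
  [AddCommGroup X] [Module ℝ X] (G : Q →ₗ[ℝ] X)

theorem LinearMap.injective_domRestrict_orthogonal_ker :
    Function.Injective (G.domRestrict (ker G)ᗮ) :=
  LinearMap.injective_domRestrict_iff.2 (ker G).orthogonal_disjoint.symm

theorem LinearMap.range_domRestrict_orthogonal_ker [(ker G).HasOrthogonalProjection] :
    range (G.domRestrict (ker G)ᗮ) = range G := by
  rw [LinearMap.range_domRestrict, LinearMap.range_eq_map]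
  refine le_antisymm (Submodule.map_mono le_top) ?_
  rw [LinearMap.map_le_map_iff, sup_comm, Submodule.sup_orthogonal_of_hasOrthogonalProjection]

end OrthogonalKer

theorem discrete_stokes_wellposed_general
    {X Y Q : Type*}
    [NormedAddCommGroup X] [InnerProductSpace ℝ X] [FiniteDimensional ℝ X]
    [NormedAddCommGroup Y] [InnerProductSpace ℝ Y]
    [NormedAddCommGroup Q] [InnerProductSpace ℝ Q] [FiniteDimensional ℝ Q]
    (G : Q →ₗ[ℝ] X) (C : X →ₗ[ℝ] Y)
    (hex : LinearMap.ker C = LinearMap.range G)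
    (L : X →ₗ[ℝ] ℝ) :
    ∃! up : X × (LinearMap.ker G)ᗮ,
      (∀ v : X, (inner ℝ (C up.1) (C v) : ℝ) + (inner ℝ (G (up.2 : Q)) v : ℝ) = L v) ∧
      (∀ q ∈ (LinearMap.ker G)ᗮ, (inner ℝ (G q) up.1 : ℝ) = 0) := by
  have hsep : (stokesForm (G.domRestrict (ker G)ᗮ) C).SeparatingLeft :=
    separatingLeft_stokesForm G.injective_domRestrict_orthogonal_ker
      (hex.trans_le G.range_domRestrict_orthogonal_ker.ge)
  have hsol := hsep.existsUnique_apply_eq (L ∘ₗ LinearMap.fst ℝ X _)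
  simpa only [stokesForm_eq_comp_fst_iff, Subtype.forall, LinearMap.domRestrict_apply]
    using hsol

/-- Abstract well-posedness of the discrete Stokes mixed problem: if `C∘G = 0`,
`Ker C = Im G`, and the Poincaré–Wirtinger and Poincaré inequalities hold, then
for every linear functional `L` on `X` the mixed problem
`⟨Cu, Cv⟩ + ⟨Gp, v⟩ = L(v)` for all `v`, `⟨Gq, u⟩ = 0` for all `q ∈ Q₀ = (Ker G)ᗮ`
has a unique solution `(u, p) ∈ X × Q₀`. -/
theorem discrete_stokes_wellposed
    {X Y Q : Type*}
    [NormedAddCommGroup X] [InnerProductSpace ℝ X] [FiniteDimensional ℝ X]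
    [NormedAddCommGroup Y] [InnerProductSpace ℝ Y] [FiniteDimensional ℝ Y]
    [NormedAddCommGroup Q] [InnerProductSpace ℝ Q] [FiniteDimensional ℝ Q]
    (G : Q →ₗ[ℝ] X) (C : X →ₗ[ℝ] Y)
    (hCG : ∀ q, C (G q) = 0)
    (hex : LinearMap.ker C = LinearMap.range G)
    (CP : ℝ) (hCP : 0 < CP) (hPW : ∀ q ∈ (LinearMap.ker G)ᗮ, ‖q‖ ≤ CP * ‖G q‖)
    (CC : ℝ) (hCC : 0 < CC) (hP : ∀ ψ ∈ (LinearMap.ker C)ᗮ, ‖ψ‖ ≤ CC * ‖C ψ‖)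
    (L : X →ₗ[ℝ] ℝ) :
    ∃! up : X × (LinearMap.ker G)ᗮ,
      (∀ v : X, (inner ℝ (C up.1) (C v) : ℝ) + (inner ℝ (G (up.2 : Q)) v : ℝ) = L v) ∧
      (∀ q ∈ (LinearMap.ker G)ᗮ, (inner ℝ (G q) up.1 : ℝ) = 0) :=
  discrete_stokes_wellposed_general G C hex L
end
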